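/- arXiv:1912.12512 — 7 statements merged into one kernel-verified Lean document; each statement's English description precedes it below -/
import Mathlib

section
/- Let C be a finite cell decomposition of the 2-sphere with oriented edges such that every 2-cell has exponent sum 0 (its boundary traversal contains equally many positive and negative edges). Then C contains a sink (a vertex all of whose incident edges point toward it) and a source (a vertex all of whose incident edges point away from it). -/
/-- A graph with oriented edges. -/
structure DGraph where
  V : Type
  E : Type
  src : E → V
  tgt : E → V

namespace DGraph

variable (G : DGraph)

/-- A step traverses an edge either forwards (`true`) or backwards (`false`). -/
def stepSrc (s : G.E × Bool) : G.V := if s.2 then G.src s.1 else G.tgt s.1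

def stepTgt (s : G.E × Bool) : G.V := if s.2 then G.tgt s.1 else G.src s.1

/-- `IsWalk v l w`: the list of steps `l` forms an edge path from `v` to `w`. -/
def IsWalk : G.V → List (G.E × Bool) → G.V → Prop
  | v, [], w => v = w
  | v, s :: l, w => G.stepSrc s = v ∧ IsWalk (G.stepTgt s) l w

/-- The exponent sum of an edge path: forward steps count `+1`, backward steps `-1`. -/
def expSum (l : List (G.E × Bool)) : ℤ :=
  (l.map fun s => if s.2 then (1 : ℤ) else -1).sum

/-- A sink: all incident edges point toward the vertex. -/
def IsSink (v : G.V) : Prop := ∀ e, (G.src e = v ∨ G.tgt e = v) → G.tgt e = v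

/-- A source: all incident edges point away from the vertex. -/
def IsSource (v : G.V) : Prop := ∀ e, (G.src e = v ∨ G.tgt e = v) → G.src e = v

end DGraph

namespace DGraph

variable (G : DGraph)

theorem isWalk_append {v w u : G.V} {l l' : List (G.E × Bool)}
    (h1 : G.IsWalk v l w) (h2 : G.IsWalk w l' u) : G.IsWalk v (l ++ l') u := by
  induction l generalizing v with
  | nil => simpa [IsWalk] using h1 ▸ h2
  | cons s t ih =>
    obtain ⟨hs, ht⟩ := h1
    exact ⟨hs, ih ht⟩

theorem isWalk_reverse {v w : G.V} {l : List (G.E × Bool)}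
    (h : G.IsWalk v l w) : G.IsWalk w (l.reverse.map fun s => (s.1, !s.2)) v := by
  induction l generalizing v with
  | nil => simpa [IsWalk] using h.symm
  | cons s t ih =>
    obtain ⟨hs, ht⟩ := h
    have : G.IsWalk (G.stepTgt s) [(s.1, !s.2)] v := by
      constructor
      · cases hb : s.2 <;> simp_all [stepSrc, stepTgt]
      · cases hb : s.2 <;> simp_all [IsWalk, stepSrc, stepTgt]
    simpa using G.isWalk_append (ih ht) this

theorem expSum_append (l l' : List (G.E × Bool)) :
    G.expSum (l ++ l') = G.expSum l + G.expSum l' := by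
  simp [expSum]

theorem expSum_reverse (l : List (G.E × Bool)) :
    G.expSum (l.reverse.map fun s => (s.1, !s.2)) = - G.expSum l := by
  induction l with
  | nil => simp [expSum]
  | cons s t ih =>
    simp only [List.reverse_cons, List.map_append] at *
    rw [G.expSum_append]
    simp [expSum] at *
    cases s.2 <;> simp_all <;> ring

end DGraph

/-- Let `C` be a finite cell decomposition of the 2-sphere with oriented
edges (faces are given by closed boundary walks; the sphere condition is encoded by
connectivity and the fact that the exponent sum of every closed edge path is an integer
combination of the exponent sums of the face boundaries, since the face boundaries generate
the cycle space of the 1-skeleton of a sphere).  If every 2-cell has exponent sum `0`,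
then `C` contains a sink and a source. -/
theorem sphere_exp_zero_has_sink_and_source
    (G : DGraph) [Finite G.V] [Finite G.E] [Nonempty G.V]
    {F : Type} [Finite F]
    (base : F → G.V) (bdry : F → List (G.E × Bool))
    (hface : ∀ f, G.IsWalk (base f) (bdry f) (base f))
    (hconn : ∀ v w : G.V, ∃ l, G.IsWalk v l w)
    (hsphere : ∀ (v : G.V) (l : List (G.E × Bool)), G.IsWalk v l v →
      ∃ cf : F → ℤ, G.expSum l = ∑ᶠ f, cf f * G.expSum (bdry f))
    (hzero : ∀ f, G.expSum (bdry f) = 0) :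
    (∃ v, G.IsSink v) ∧ (∃ v, G.IsSource v) := by
  -- every closed walk has exponent sum 0
  have hclosed : ∀ (v : G.V) (l : List (G.E × Bool)), G.IsWalk v l v → G.expSum l = 0 := by
    intro v l hl
    obtain ⟨cf, hcf⟩ := hsphere v l hl
    simp [hzero] at hcf
    exact hcf
  -- well-definedness of the potential
  have hwd : ∀ (v w : G.V) (l l' : List (G.E × Bool)),
      G.IsWalk v l w → G.IsWalk v l' w → G.expSum l = G.expSum l' := by
    intro v w l l' h h'
    have := hclosed v (l ++ (l'.reverse.map fun s => (s.1, !s.2)))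
      (G.isWalk_append h (G.isWalk_reverse h'))
    rw [G.expSum_append, G.expSum_reverse] at this
    omega
  obtain ⟨v0⟩ := ‹Nonempty G.V›
  set h : G.V → ℤ := fun v => G.expSum (Classical.choose (hconn v0 v)) with hh
  have hspec : ∀ v, G.IsWalk v0 (Classical.choose (hconn v0 v)) v :=
    fun v => Classical.choose_spec (hconn v0 v)
  have hval : ∀ (v : G.V) (l : List (G.E × Bool)), G.IsWalk v0 l v → h v = G.expSum l :=
    fun v l hl => hwd v0 v _ l (hspec v) hl
  have hedge : ∀ e : G.E, h (G.tgt e) = h (G.src e) + 1 := by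
    intro e
    have hw : G.IsWalk v0 (Classical.choose (hconn v0 (G.src e)) ++ [(e, true)]) (G.tgt e) :=
      G.isWalk_append (hspec (G.src e)) ⟨rfl, rfl⟩
    have := hval _ _ hw
    rw [G.expSum_append] at this
    simp [DGraph.expSum] at this
    rw [this]; rfl
  constructor
  · obtain ⟨v, hv⟩ := Finite.exists_max h
    refine ⟨v, fun e he => ?_⟩
    rcases he with he | he
    · exfalso; have := hv (G.tgt e); rw [hedge e, he] at this; omega
    · exact he
  · obtain ⟨v, hv⟩ := Finite.exists_min h
    refine ⟨v, fun e he => ?_⟩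
    rcases he with he | he
    · exact he
    · exfalso; have := hv (G.src e); have h2 := hedge e; rw [he] at h2; omega
end

section
/- Let Γ be a graph with a distinguished subgraph Δ whose edges carry weights ω ≥ 0, and suppose every homology reduced cycle z in Γ containing at least one edge outside Δ satisfies ω(z) ≥ 2. Then every cycle z in Γ that contains at least one edge outside Δ and is homology reduced relative to Δ (i.e., every cancelling pair of edges of z lies in Δ) satisfies ω(z) ≥ 2. -/
/-- A graph in which every edge comes with an inverse (oppositely oriented) edge `bar e`. -/
structure BGraph where
  V : Type
  E : Type
  bar : E → E
  bar_invol : Function.Involutive bar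
  ini : E → V

namespace BGraph

variable (G : BGraph)

/-- Terminal vertex of an edge. -/
def ter (e : G.E) : G.V := G.ini (G.bar e)

/-- `IsWalk v l w`: the list of edges `l` forms an edge path from `v` to `w`. -/
def IsWalk : G.V → List G.E → G.V → Prop
  | v, [], w => v = w
  | v, e :: l, w => G.ini e = v ∧ IsWalk (G.ter e) l w

/-- A cycle is a nonempty closed edge path. -/
def IsCycle (v : G.V) (l : List G.E) : Prop := l ≠ [] ∧ G.IsWalk v l v

/-- A cycle is homology reduced if it contains no pair of mutually inverse edges. -/
def HomReduced (l : List G.E) : Prop :=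
  ∀ i j : Fin l.length, i ≠ j → l.get i ≠ G.bar (l.get j)

/-- A cycle is homology reduced relative to the edge set `Δ` if every pair of mutually
inverse edges of it is contained in `Δ`. -/
def HomReducedRel (Δ : Set G.E) (l : List G.E) : Prop :=
  ∀ i j : Fin l.length, i ≠ j → l.get i = G.bar (l.get j) →
    l.get i ∈ Δ ∧ l.get j ∈ Δ

/-- A cycle is (cyclically) reduced if no edge is immediately followed by its inverse. -/
def Reduced (l : List G.E) : Prop :=
  ∀ i : Fin l.length,
    l.get ⟨(i.val + 1) % l.length, Nat.mod_lt _ (Nat.lt_of_le_of_lt (Nat.zero_le _) i.isLt)⟩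
      ≠ G.bar (l.get i)

/-- A graph is a forest if it contains no reduced cycle. -/
def IsForest : Prop := ∀ (v : G.V) (l : List G.E), G.IsCycle v l → ¬ G.Reduced l

/-- The quotient graph obtained by collapsing vertices along a map `c : V → W` and
deleting the edge set `E₀` (closed under `bar`). -/
def collapse {W : Type} (c : G.V → W) (E₀ : Set G.E) (hbar : ∀ e ∈ E₀, G.bar e ∈ E₀) :
    BGraph where
  V := W
  E := {e : G.E // e ∉ E₀}
  bar e := ⟨G.bar e.1, fun h => e.2 (by simpa [G.bar_invol e.1] using hbar _ h)⟩
  bar_invol e := Subtype.ext (G.bar_invol e.1)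
  ini e := c (G.ini e.1)

/-- The restriction of a graph to a `bar`-closed set of edges. -/
def restrictE (S : Set G.E) (hS : ∀ e ∈ S, G.bar e ∈ S) : BGraph where
  V := G.V
  E := {e : G.E // e ∈ S}
  bar e := ⟨G.bar e.1, hS _ e.2⟩
  bar_invol e := Subtype.ext (G.bar_invol e.1)
  ini e := G.ini e.1

end BGraph

namespace BGraph

variable (G : BGraph)

lemma isWalk_append (b : List G.E) : ∀ (a : List G.E) (v w : G.V),
    (G.IsWalk v (a ++ b) w ↔ ∃ u, G.IsWalk v a u ∧ G.IsWalk u b w) := by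
  intro a
  induction a with
  | nil => intro v w; simp [IsWalk]
  | cons e a ih =>
      intro v w
      rw [List.cons_append]
      show (G.ini e = v ∧ G.IsWalk (G.ter e) (a ++ b) w) ↔ _
      constructor
      · rintro ⟨h1, h2⟩
        obtain ⟨u, h3, h4⟩ := (ih _ _).mp h2
        exact ⟨u, ⟨h1, h3⟩, h4⟩
      · rintro ⟨u, ⟨h1, h2⟩, h3⟩
        exact ⟨h1, (ih _ _).mpr ⟨u, h2, h3⟩⟩

lemma hrr_iff (Δ : Set G.E) (l : List G.E) :
    G.HomReducedRel Δ l ↔ l.Pairwise (fun p q => p = G.bar q → p ∈ Δ ∧ q ∈ Δ) := by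
  rw [List.pairwise_iff_get]
  constructor
  · intro h i j hij
    exact h i j (Fin.ne_of_lt hij)
  · intro h i j hij hpq
    rcases lt_or_gt_of_ne hij with hlt | hgt
    · exact h i j hlt hpq
    · obtain ⟨a, b⟩ := h j i hgt (by rw [hpq, G.bar_invol])
      exact ⟨b, a⟩

end BGraph

/-- Let `Γ` be a graph with a distinguished subgraph `Δ` whose edges carry
weights `ω ≥ 0`, and suppose every homology reduced cycle containing at least one edge
outside `Δ` has total weight `≥ 2`.  Then every cycle containing at least one edge outside
`Δ` which is homology reduced relative to `Δ` also has total weight `≥ 2`. -/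
theorem weight_of_relatively_homreduced_cycles
    (G : BGraph) (Δ : Set G.E) (ω : G.E → ℝ)
    (hΔbar : ∀ e ∈ Δ, G.bar e ∈ Δ)
    (hpos : ∀ e ∈ Δ, 0 ≤ ω e)
    (h2 : ∀ (v : G.V) (l : List G.E), G.IsCycle v l → G.HomReduced l →
      (∃ e ∈ l, e ∉ Δ) → 2 ≤ (l.map ω).sum) :
    ∀ (v : G.V) (l : List G.E), G.IsCycle v l → G.HomReducedRel Δ l →
      (∃ e ∈ l, e ∉ Δ) → 2 ≤ (l.map ω).sum := by
  suffices H : ∀ (n : ℕ) (v : G.V) (l : List G.E), l.length ≤ n → G.IsCycle v l →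
      G.HomReducedRel Δ l → (∃ e ∈ l, e ∉ Δ) → 2 ≤ (l.map ω).sum by
    intro v l hc hr he; exact H l.length v l le_rfl hc hr he
  intro n
  induction n with
  | zero =>
      intro v l hl hc _ _
      exact absurd (List.eq_nil_of_length_eq_zero (Nat.le_zero.mp hl)) hc.1
  | succ n ih =>
    intro v l hl hc hr he
    by_cases hred : G.HomReduced l
    · exact h2 v l hc hred he
    · -- a helper: closed walks homology reduced rel Δ of length ≤ n have nonneg weight
      have hnn : ∀ (u : G.V) (m : List G.E), m.length ≤ n → G.IsWalk u m u →
          G.HomReducedRel Δ m → 0 ≤ (m.map ω).sum := by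
        intro u m hm hw hrm
        by_cases hall : ∀ a ∈ m, a ∈ Δ
        · apply List.sum_nonneg
          intro s hs
          obtain ⟨a, ha, rfl⟩ := List.mem_map.mp hs
          exact hpos a (hall a ha)
        · push_neg at hall
          obtain ⟨a, ham, hna⟩ := hall
          have h2m := ih u m hm ⟨List.ne_nil_of_mem ham, hw⟩ hrm ⟨a, ham, hna⟩
          linarith
      -- extract a cancelling pair with i < j
      unfold BGraph.HomReduced at hred
      push_neg at hred
      obtain ⟨i0, j0, hij0, hb0⟩ := hred
      have key : ∃ i j : Fin l.length, i.val < j.val ∧ l.get i = G.bar (l.get j) := by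
        rcases lt_or_gt_of_ne hij0 with hlt | hgt
        · exact ⟨i0, j0, hlt, hb0⟩
        · exact ⟨j0, i0, hgt, by rw [hb0, G.bar_invol]⟩
      obtain ⟨i, j, hlt, hb⟩ := key
      have hefΔ : l.get i ∈ Δ ∧ l.get j ∈ Δ := hr i j (Fin.ne_of_lt hlt) hb
      -- decompose l = x ++ e :: y ++ f :: z
      set e := l.get i with he_def
      set f := l.get j with hf_def
      set x := l.take i.val with hx_def
      set y := (l.drop (i.val + 1)).take (j.val - i.val - 1) with hy_def
      set z := l.drop (j.val + 1) with hz_def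
      have hdij : l.drop (i.val + 1) = y ++ f :: z := by
        conv_lhs => rw [← List.take_append_drop (j.val - i.val - 1) (l.drop (i.val + 1))]
        rw [hy_def]
        congr 1
        rw [List.drop_drop]
        have hj : i.val + 1 + (j.val - i.val - 1) = j.val := by omega
        rw [hj, List.drop_eq_getElem_cons j.isLt]
        simp [hf_def, hz_def, List.get_eq_getElem]
      have hl' : l = x ++ e :: (y ++ f :: z) := by
        conv_lhs => rw [← List.take_append_drop i.val l, List.drop_eq_getElem_cons i.isLt]
        rw [hdij]
        rfl
      -- relations between e and f
      have hfe : f = G.bar e := by rw [hb, G.bar_invol]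
      -- walk decomposition
      have hw := hc.2
      rw [hl', G.isWalk_append] at hw
      obtain ⟨u1, hwx, hini_e, hw3⟩ := hw
      rw [G.isWalk_append] at hw3
      obtain ⟨u2, hwy, hini_f, hwz⟩ := hw3
      -- ter f = ini e = u1, ini f = ter e
      have hterf : G.ter f = u1 := by rw [BGraph.ter, ← hb, hini_e]
      have hinif : G.ini f = G.ter e := by rw [hfe]; rfl
      rw [hinif] at hini_f
      rw [hterf] at hwz
      rw [← hini_f] at hwy
      -- hwy : IsWalk (ter e) y (ter e), hwx : IsWalk v x u1, hwz : IsWalk u1 z v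
      have hwxz : G.IsWalk v (x ++ z) v := (G.isWalk_append z x v v).mpr ⟨u1, hwx, hwz⟩
      -- lengths
      have hlen : x.length + 1 + (y.length + 1 + z.length) = l.length := by
        rw [hl']; simp; omega
      -- sublists and HomReducedRel of the pieces
      have hP := (G.hrr_iff Δ l).mp hr
      have hsuby : y.Sublist l := by
        rw [hl']
        exact ((((List.sublist_append_left y (f :: z)).trans
          (List.sublist_cons_self e _))).trans (List.sublist_append_right x _))
      have hsubxz : (x ++ z).Sublist l := by
        rw [hl']
        refine List.Sublist.append (List.Sublist.refl x) ?_
        exact ((List.sublist_cons_self f z).trans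
          (List.sublist_append_right y (f :: z))).trans (List.sublist_cons_self e _)
      have hry : G.HomReducedRel Δ y := (G.hrr_iff Δ y).mpr (hP.sublist hsuby)
      have hrxz : G.HomReducedRel Δ (x ++ z) := (G.hrr_iff Δ (x ++ z)).mpr (hP.sublist hsubxz)
      -- sum decomposition
      have hsum : (l.map ω).sum =
          ((x ++ z).map ω).sum + ω e + (y.map ω).sum + ω f := by
        rw [hl']; simp; ring
      -- locate the outside edge
      obtain ⟨e0, he0l, he0⟩ := he
      rw [hl'] at he0l
      simp only [List.mem_append, List.mem_cons] at he0l
      have he0yxz : e0 ∈ y ∨ e0 ∈ x ++ z := by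
        rcases he0l with h | h | h
        · right; exact List.mem_append.mpr (Or.inl h)
        · exact absurd (h ▸ hefΔ.1) he0
        · rcases h with h | h | h
          · left; exact h
          · exact absurd (h ▸ hefΔ.2) he0
          · right; exact List.mem_append.mpr (Or.inr h)
      have hωe : 0 ≤ ω e := hpos e hefΔ.1
      have hωf : 0 ≤ ω f := hpos f hefΔ.2
      have hleny : y.length ≤ n := by omega
      have hlenxz : (x ++ z).length ≤ n := by rw [List.length_append]; omega
      rcases he0yxz with hin | hin
      · have h2y : 2 ≤ (y.map ω).sum :=
          ih (G.ter e) y hleny ⟨List.ne_nil_of_mem hin, hwy⟩ hry ⟨e0, hin, he0⟩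
        have h0xz : 0 ≤ ((x ++ z).map ω).sum := hnn v (x ++ z) hlenxz hwxz hrxz
        linarith
      · have h2xz : 2 ≤ ((x ++ z).map ω).sum :=
          ih v (x ++ z) hlenxz ⟨List.ne_nil_of_mem hin, hwxz⟩ hrxz ⟨e0, hin, he0⟩
        have h0y : 0 ≤ (y.map ω).sum := hnn (G.ter e) y hleny hwy hry
        linarith
end

section
/- Let S be a cell decomposition of the 2-sphere with corner weights such that every 2-cell d with q corners satisfies Σ(weights of corners of d) ≤ q − 2 and every vertex v satisfies Σ(weights of corners at v) ≥ 2. Then we arrive at a contradiction: no such weight assignment exists. -/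
open Finset

/-- Let `S` be a cell decomposition of the 2-sphere (Euler characteristic
`#V − #E + #F = 2`, each edge on exactly two face sides, a face with `sides f` boundary
edges has `sides f` corners) with real corner weights such that every face `f` satisfies
`Σ (weights of corners of f) ≤ sides f − 2` and every vertex `v` satisfies
`Σ (weights of corners at v) ≥ 2`.  Then we get a contradiction: no such weight
assignment exists. -/
theorem no_weights_on_sphere
    (V E F C : Type) [Fintype V] [Fintype E] [Fintype F] [Fintype C]
    [DecidableEq V] [DecidableEq F]
    (cv : C → V) (cf : C → F) (sides : F → ℕ)
    (hsides : ∀ f, (univ.filter fun c => cf c = f).card = sides f)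
    (hedges : ∑ f, sides f = 2 * Fintype.card E)
    (heuler : (Fintype.card V : ℤ) - Fintype.card E + Fintype.card F = 2)
    (ω : C → ℝ)
    (hface : ∀ f, (∑ c ∈ univ.filter fun c => cf c = f, ω c) ≤ (sides f : ℝ) - 2)
    (hvert : ∀ v, 2 ≤ ∑ c ∈ univ.filter fun c => cv c = v, ω c) :
    False := by
  have h1 : (∑ c, ω c) = ∑ f, ∑ c ∈ univ.filter fun c => cf c = f, ω c :=
    (Finset.sum_fiberwise univ cf ω).symm
  have h2 : (∑ c, ω c) = ∑ v, ∑ c ∈ univ.filter fun c => cv c = v, ω c :=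
    (Finset.sum_fiberwise univ cv ω).symm
  have hub : (∑ c, ω c) ≤ 2 * Fintype.card E - 2 * Fintype.card F := by
    rw [h1]
    calc ∑ f, ∑ c ∈ univ.filter fun c => cf c = f, ω c
        ≤ ∑ f, ((sides f : ℝ) - 2) := Finset.sum_le_sum fun f _ => hface f
      _ = (∑ f, (sides f : ℝ)) - 2 * Fintype.card F := by
          rw [Finset.sum_sub_distrib, Finset.sum_const, Fintype.card, nsmul_eq_mul]
          ring
      _ = 2 * Fintype.card E - 2 * Fintype.card F := by
          have : (∑ f, (sides f : ℝ)) = ((∑ f, sides f : ℕ) : ℝ) := by push_cast; ring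
          rw [this, hedges]; push_cast; ring
  have hlb : 2 * (Fintype.card V : ℝ) ≤ ∑ c, ω c := by
    rw [h2]
    calc 2 * (Fintype.card V : ℝ) = ∑ _v : V, (2:ℝ) := by
          rw [Finset.sum_const, Fintype.card, nsmul_eq_mul]; ring
      _ ≤ _ := Finset.sum_le_sum fun v _ => hvert v
  have : (Fintype.card V : ℝ) - Fintype.card E + Fintype.card F ≤ 0 := by linarith
  have h2' : ((2:ℝ)) ≤ 0 := by
    have := heuler
    have : (Fintype.card V : ℝ) - Fintype.card E + Fintype.card F = 2 := by
      exact_mod_cast heuler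
    linarith
  linarith
end

section
/- Let Γ be an injective compressed labeled oriented tree (LOT) and Γ₁ a maximal proper sub-LOT. If the quotient LOT Γ̄₁ obtained by collapsing Γ₁ is not compressed, then Γ = Γ₁ ∪ e for a single edge e attached to Γ₁, the vertex y of e not in Γ₁ does not occur as an edge label in Γ₁, and in particular Γ is not boundary reduced. -/
/-- A labeled oriented graph (LOG): an oriented graph whose edges are labeled by vertices.
A labeled oriented tree (LOT) is a LOG satisfying `IsTree`. -/
structure LOG where
  V : Type
  E : Type
  src : E → V
  tgt : E → V
  lab : E → V

namespace LOG

variable (G : LOG)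

/-- Adjacency in the underlying undirected graph. -/
def Adj (v w : G.V) : Prop :=
  ∃ e, (G.src e = v ∧ G.tgt e = w) ∨ (G.src e = w ∧ G.tgt e = v)

/-- Adjacency using only edges from `S`. -/
def AdjOn (S : Set G.E) (v w : G.V) : Prop :=
  ∃ e ∈ S, (G.src e = v ∧ G.tgt e = w) ∨ (G.src e = w ∧ G.tgt e = v)

/-- The vertices incident to an edge set. -/
def verts (S : Set G.E) : Set G.V := {v | ∃ e ∈ S, G.src e = v ∨ G.tgt e = v}

/-- Connectivity of the subgraph spanned by the edge set `S`. -/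
def ConnOn (S : Set G.E) : Prop :=
  ∀ v ∈ G.verts S, ∀ w ∈ G.verts S, Relation.ReflTransGen (G.AdjOn S) v w

/-- The underlying graph is a finite tree: connected, without loops or multiple edges,
and with one more vertex than edges. -/
def IsTree : Prop :=
  Finite G.V ∧ Finite G.E ∧ Nonempty G.V ∧
  (∀ v w : G.V, Relation.ReflTransGen G.Adj v w) ∧
  (∀ e, G.src e ≠ G.tgt e) ∧
  (∀ e e', ({G.src e, G.tgt e} : Set G.V) = {G.src e', G.tgt e'} → e = e') ∧
  Nat.card G.V = Nat.card G.E + 1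

/-- No edge is labeled with one of its own endpoints. -/
def Compressed : Prop := ∀ e, G.lab e ≠ G.src e ∧ G.lab e ≠ G.tgt e

/-- Each vertex occurs as an edge label at most once. -/
def Inj : Prop := ∀ e e', G.lab e = G.lab e' → e = e'

/-- A leaf (boundary vertex): a vertex incident with exactly one edge. -/
def IsLeaf (v : G.V) : Prop := {e | G.src e = v ∨ G.tgt e = v}.ncard = 1

/-- Every boundary vertex occurs as an edge label. -/
def BoundaryReduced : Prop := ∀ v, G.IsLeaf v → ∃ e, G.lab e = v

/-- Reduced: compressed and boundary reduced. -/
def Reduced : Prop := G.Compressed ∧ G.BoundaryReduced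

/-- A sub-LOT, given by a nonempty connected set of edges all of whose labels are
vertices of the subgraph. -/
def IsSubLOT (S : Set G.E) : Prop :=
  S.Nonempty ∧ G.ConnOn S ∧ ∀ e ∈ S, G.lab e ∈ G.verts S

/-- A proper sub-LOT. -/
def ProperSubLOT (S : Set G.E) : Prop := G.IsSubLOT S ∧ S ≠ Set.univ

/-- A maximal proper sub-LOT. -/
def MaxProperSubLOT (S : Set G.E) : Prop :=
  G.ProperSubLOT S ∧ ∀ T, G.ProperSubLOT T → S ⊆ T → S = T

/-- A prime LOG: one with no proper sub-LOT. -/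
def Prime : Prop := ∀ S, ¬ G.ProperSubLOT S

/-- A LOG freely decomposes if it is the union of two proper sub-LOTs meeting in a
single vertex. -/
def FreelyDecomposes : Prop :=
  ∃ (SL SR : Set G.E) (x : G.V), G.ProperSubLOT SL ∧ G.ProperSubLOT SR ∧
    SL ∪ SR = Set.univ ∧ G.verts SL ∩ G.verts SR = {x}

/-- The map collapsing the vertices of the subgraph spanned by `S` to the vertex `x`. -/
noncomputable def collapseMap (S : Set G.E) (x : G.V) : G.V → G.V :=
  fun v => letI := Classical.dec (v ∈ G.verts S); if v ∈ G.verts S then x else v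

/-- The quotient LOG obtained by collapsing the sub-LOT `S` to the vertex `x`
(the vertex of `S` not occurring as an edge label of `S`).  The edges are the edges
outside `S`; endpoints and labels are pushed forward along the collapse map. -/
noncomputable def collapse (S : Set G.E) (x : G.V) : LOG where
  V := G.V
  E := {e : G.E // e ∉ S}
  src e := G.collapseMap S x (G.src e.1)
  tgt e := G.collapseMap S x (G.tgt e.1)
  lab e := G.collapseMap S x (G.lab e.1)

end LOG

/-!
Collapsing only identifies vertices of `Γ₁`, so an edge `e₀` of `Γ̄₁` that is not compressed lies
outside `Γ₁` and has its label and one of its endpoints in `Γ₁`. Then `Γ₁ ∪ e₀` is again a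
sub-LOT, so maximality forces `Γ = Γ₁ ∪ e₀`. Now `Γ₁` is connected with `#V(Γ) - 2` edges, so it
misses some vertex of the tree `Γ`; as every vertex lies on an edge, this is the other endpoint
`y` of `e₀`. Hence `y` is a leaf, while every edge label is a vertex of `Γ₁`, so none is `y`.
-/

theorem Set.mem_iff_ne_of_compl_eq_singleton {α : Type*} {S : Set α} {e f : α}
    (h : Sᶜ = {e}) : f ∈ S ↔ f ≠ e := by
  rw [← compl_compl S, h]
  rfl

namespace LOG

variable {G : LOG} {S : Set G.E}

instance : Std.Symm (G.AdjOn S) where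
  symm := by
    rintro u v ⟨e, he, h | h⟩
    · exact ⟨e, he, Or.inr h⟩
    · exact ⟨e, he, Or.inl h⟩

lemma AdjOn.mono {T : Set G.E} (hST : S ⊆ T) {u v : G.V} (h : G.AdjOn S u v) :
    G.AdjOn T u v :=
  let ⟨e, he, h⟩ := h; ⟨e, hST he, h⟩

lemma verts_mono {T : Set G.E} (hST : S ⊆ T) : G.verts S ⊆ G.verts T :=
  fun _ ⟨e, he, h⟩ => ⟨e, hST he, h⟩

variable (G) in
def spanGraph (S : Set G.E) : SimpleGraph G.V :=
  SimpleGraph.fromEdgeSet ((fun e => s(G.src e, G.tgt e)) '' S)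

lemma reachable_spanGraph : (G.spanGraph S).Reachable = Relation.ReflTransGen (G.AdjOn S) := by
  rw [spanGraph, SimpleGraph.reachable_fromEdgeSet_eq_reflTransGen_toRel]
  congr 1
  ext u v
  simp [AdjOn]

lemma ConnOn.card_le_ncard_add_one (hS : G.ConnOn S) (hspan : G.verts S = Set.univ)
    (hfin : S.Finite) : Nat.card G.V ≤ S.ncard + 1 := by
  rcases isEmpty_or_nonempty G.V with hV | hV
  · simp
  have hconn : (G.spanGraph S).Connected := by
    refine (SimpleGraph.connected_iff _).mpr ⟨fun u v => ?_, hV⟩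
    rw [reachable_spanGraph]
    exact hS u (hspan ▸ Set.mem_univ u) v (hspan ▸ Set.mem_univ v)
  calc Nat.card G.V ≤ Nat.card (G.spanGraph S).edgeSet + 1 :=
        hconn.card_vert_le_card_edgeSet_add_one
    _ ≤ ((fun e => s(G.src e, G.tgt e)) '' S).ncard + 1 := by
        rw [Nat.card_coe_set_eq, spanGraph, SimpleGraph.edgeSet_fromEdgeSet]
        exact Nat.add_le_add_right (Set.ncard_le_ncard Set.sdiff_subset (hfin.image _)) 1
    _ ≤ S.ncard + 1 := by grw [Set.ncard_image_le hfin]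

lemma IsTree.verts_univ (hT : G.IsTree) [Nonempty G.E] : G.verts Set.univ = Set.univ := by
  obtain ⟨hV, hE, -, hconn, -, -, hcard⟩ := hT
  have : Nontrivial G.V :=
    Finite.one_lt_card_iff_nontrivial.mp (by have := Nat.card_pos (α := G.E); omega)
  refine Set.eq_univ_of_forall fun v => ?_
  obtain ⟨w, hw⟩ := exists_ne v
  rcases (hconn v w).cases_head with rfl | ⟨-, ⟨e, ⟨h, -⟩ | ⟨-, h⟩⟩, -⟩
  · exact absurd rfl hw
  · exact ⟨e, trivial, Or.inl h⟩
  · exact ⟨e, trivial, Or.inr h⟩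

lemma mem_verts_of_collapseMap_eq {x a b : G.V} (hx : x ∈ G.verts S) (hab : a ≠ b)
    (h : G.collapseMap S x a = G.collapseMap S x b) : a ∈ G.verts S ∧ b ∈ G.verts S := by
  unfold collapseMap at h
  by_cases ha : a ∈ G.verts S <;> by_cases hb : b ∈ G.verts S <;>
    simp only [ha, hb, ↓reduceIte] at h
  · exact ⟨ha, hb⟩
  · exact absurd (h ▸ hx) hb
  · exact absurd (h ▸ hx) ha
  · exact absurd h hab

lemma exists_lab_mem_verts_of_not_compressed_collapse (hC : G.Compressed) {x : G.V}
    (hx : x ∈ G.verts S) (hnc : ¬ (G.collapse S x).Compressed) :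
    ∃ e ∉ S, G.lab e ∈ G.verts S ∧ (G.src e ∈ G.verts S ∨ G.tgt e ∈ G.verts S) := by
  simp only [Compressed, collapse, not_forall, not_and_or, not_not] at hnc
  obtain ⟨⟨e, he⟩, h | h⟩ := hnc
  · obtain ⟨hlab, hsrc⟩ := mem_verts_of_collapseMap_eq hx (hC e).1 h
    exact ⟨e, he, hlab, Or.inl hsrc⟩
  · obtain ⟨hlab, htgt⟩ := mem_verts_of_collapseMap_eq hx (hC e).2 h
    exact ⟨e, he, hlab, Or.inr htgt⟩

lemma connOn_insert (hS : G.ConnOn S) {e : G.E}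
    (he : G.src e ∈ G.verts S ∨ G.tgt e ∈ G.verts S) : G.ConnOn (insert e S) := by
  have hsub : S ⊆ insert e S := Set.subset_insert e S
  have hreach : ∀ v ∈ G.verts (insert e S), ∃ w ∈ G.verts S,
      Relation.ReflTransGen (G.AdjOn (insert e S)) v w := by
    rintro v ⟨f, rfl | hf, hv⟩
    · rcases he with hs | ht
      · rcases hv with rfl | rfl
        · exact ⟨_, hs, .refl⟩
        · exact ⟨_, hs, .single ⟨f, Set.mem_insert f S, Or.inr ⟨rfl, rfl⟩⟩⟩
      · rcases hv with rfl | rfl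
        · exact ⟨_, ht, .single ⟨f, Set.mem_insert f S, Or.inl ⟨rfl, rfl⟩⟩⟩
        · exact ⟨_, ht, .refl⟩
    · exact ⟨v, ⟨f, hf, hv⟩, .refl⟩
  intro u hu v hv
  obtain ⟨u', hu', hu⟩ := hreach u hu
  obtain ⟨v', hv', hv⟩ := hreach v hv
  have hS' : Relation.ReflTransGen (G.AdjOn (insert e S)) u' v' :=
    Relation.ReflTransGen.mono (fun _ _ => AdjOn.mono hsub) _ _ (hS u' hu' v' hv')
  exact hu.trans (hS'.trans (symm hv))

lemma isSubLOT_insert (hS : G.IsSubLOT S) {e : G.E} (hlab : G.lab e ∈ G.verts S)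
    (he : G.src e ∈ G.verts S ∨ G.tgt e ∈ G.verts S) : G.IsSubLOT (insert e S) := by
  obtain ⟨-, hconn, hSlab⟩ := hS
  refine ⟨Set.insert_nonempty e S, connOn_insert hconn he, fun f hf => ?_⟩
  rcases hf with rfl | hf
  · exact verts_mono (Set.subset_insert _ _) hlab
  · exact verts_mono (Set.subset_insert _ _) (hSlab f hf)

lemma MaxProperSubLOT.compl_eq_singleton (hS : G.MaxProperSubLOT S) {e : G.E} (he : e ∉ S)
    (hins : G.IsSubLOT (insert e S)) : Sᶜ = {e} := by
  have huniv : insert e S = Set.univ := by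
    by_contra hne
    exact he (hS.2 _ ⟨hins, hne⟩ (Set.subset_insert e S) ▸ Set.mem_insert e S)
  ext f
  have hf : f ∈ insert e S := huniv ▸ Set.mem_univ f
  constructor
  · exact hf.resolve_right
  · rintro rfl
    exact he

lemma exists_endpoint_not_mem_verts (hT : G.IsTree) (hS : G.ConnOn S) {e : G.E}
    (hcompl : Sᶜ = {e}) : ∃ y, (G.src e = y ∨ G.tgt e = y) ∧ y ∉ G.verts S := by
  have : Nonempty G.E := ⟨e⟩
  by_contra! hboth
  have hspan : G.verts S = Set.univ := by
    refine Set.eq_univ_of_forall fun v => ?_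
    obtain ⟨f, -, hv⟩ : v ∈ G.verts Set.univ := hT.verts_univ ▸ Set.mem_univ v
    by_cases hf : f = e
    · exact hboth v (hf ▸ hv)
    · exact ⟨f, (Set.mem_iff_ne_of_compl_eq_singleton hcompl).mpr hf, hv⟩
  obtain ⟨-, hE, -, -, -, -, hcard⟩ := hT
  have hcardS : S.ncard + 1 = Nat.card G.E := by
    rw [← Set.ncard_add_ncard_compl S, hcompl, Set.ncard_singleton]
  have := hS.card_le_ncard_add_one hspan S.toFinite
  omega

lemma isLeaf_of_compl_eq_singleton {e : G.E} (hcompl : Sᶜ = {e}) {y : G.V}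
    (hy : G.src e = y ∨ G.tgt e = y) (hyS : y ∉ G.verts S) : G.IsLeaf y := by
  have hinc : {f | G.src f = y ∨ G.tgt f = y} = {e} := by
    ext f
    refine ⟨fun hf => ?_, fun hf => hf ▸ hy⟩
    by_contra hfe
    exact hyS ⟨f, (Set.mem_iff_ne_of_compl_eq_singleton hcompl).mpr hfe, hf⟩
  rw [IsLeaf, hinc, Set.ncard_singleton]

end LOG

theorem collapse_not_compressed_structure_general
    (G : LOG) (hT : G.IsTree) (hC : G.Compressed)
    (S : Set G.E) (hS : G.MaxProperSubLOT S)
    (x : G.V) (hx : x ∈ G.verts S)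
    (hnc : ¬ (G.collapse S x).Compressed) :
    ∃ e₀ : G.E, e₀ ∉ S ∧ Sᶜ = {e₀} ∧
      ∃ y : G.V, (G.src e₀ = y ∨ G.tgt e₀ = y) ∧ y ∉ G.verts S ∧
        (∀ e ∈ S, G.lab e ≠ y) ∧ ¬ G.BoundaryReduced := by
  have hS₁ : G.IsSubLOT S := hS.1.1
  obtain ⟨e₀, he₀, hlab₀, hend₀⟩ :=
    LOG.exists_lab_mem_verts_of_not_compressed_collapse hC hx hnc
  have hcompl : Sᶜ = {e₀} :=
    hS.compl_eq_singleton he₀ (LOG.isSubLOT_insert hS₁ hlab₀ hend₀)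
  obtain ⟨y, hy, hyS⟩ := LOG.exists_endpoint_not_mem_verts hT hS₁.2.1 hcompl
  have hlab : ∀ e, G.lab e ∈ G.verts S := fun e => by
    by_cases he : e = e₀
    · exact he ▸ hlab₀
    · exact hS₁.2.2 e ((Set.mem_iff_ne_of_compl_eq_singleton hcompl).mpr he)
  refine ⟨e₀, he₀, hcompl, y, hy, hyS, fun e _ h => hyS (h ▸ hlab e), fun hBR => ?_⟩
  obtain ⟨e, he⟩ := hBR y (LOG.isLeaf_of_compl_eq_singleton hcompl hy hyS)
  exact hyS (he ▸ hlab e)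

/-- Let `Γ` be an injective compressed LOT and `Γ₁` (edge set `S`) a
maximal proper sub-LOT, with `x` the unique vertex of `Γ₁` not occurring as an edge label
of `Γ₁`.  If the quotient LOT `Γ̄₁` obtained by collapsing `Γ₁` to `x` is not compressed,
then `Γ = Γ₁ ∪ e` for a single edge `e` attached to `Γ₁`, whose vertex `y` not in `Γ₁` does
not occur as an edge label in `Γ₁`; in particular `Γ` is not boundary reduced. -/
theorem collapse_not_compressed_structure
    (G : LOG) (hT : G.IsTree) (hC : G.Compressed) (hI : G.Inj)
    (S : Set G.E) (hS : G.MaxProperSubLOT S)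
    (x : G.V) (hx : x ∈ G.verts S) (hxlab : ∀ e ∈ S, G.lab e ≠ x)
    (hnc : ¬ (G.collapse S x).Compressed) :
    ∃ e₀ : G.E, e₀ ∉ S ∧ Sᶜ = {e₀} ∧
      ∃ y : G.V, (G.src e₀ = y ∨ G.tgt e₀ = y) ∧ y ∉ G.verts S ∧
        (∀ e ∈ S, G.lab e ≠ y) ∧ ¬ G.BoundaryReduced :=
  collapse_not_compressed_structure_general G hT hC S hS x hx hnc
end

section
/- Let L be a 2-complex and K a subcomplex such that L is VA relative to K. Then π₂(L) is generated as a π₁(L)-module by the image of π₂(K) under the inclusion-induced map. In particular, if K is aspherical then L is aspherical. -/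
/-- A combinatorial 2-complex: oriented edges come in inverse pairs (`bar`), and each
2-cell `f` is attached along the closed edge path `att f`. -/
structure TwoComplex where
  V : Type
  E : Type
  F : Type
  bar : E → E
  bar_invol : Function.Involutive bar
  ini : E → V
  att : F → List E

namespace TwoComplex

variable (C : TwoComplex)

def ter (e : C.E) : C.V := C.ini (C.bar e)

/-- Connectivity of the 1-skeleton. -/
def Conn : Prop :=
  ∀ v w : C.V, Relation.ReflTransGen (fun a b => ∃ e, C.ini e = a ∧ C.ter e = b) v w

open Classical in
/-- `C` is a cell decomposition of the 2-sphere: finite, connected, every oriented edge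
occurs exactly once in the attaching paths of the 2-cells (a closed oriented surface),
and the Euler characteristic is `2`. -/
noncomputable def IsSphere : Prop :=
  Finite C.V ∧ Finite C.E ∧ Finite C.F ∧ Nonempty C.F ∧
  (∀ e : C.E, C.bar e ≠ e) ∧
  (∀ e : C.E, (∑ᶠ f : C.F, ((C.att f).countP fun e' => decide (e' = e))) = 1) ∧
  C.Conn ∧
  2 * (Nat.card C.V : ℤ) - Nat.card C.E + 2 * Nat.card C.F = 4

/-- The 2-cell `f` has a corner at `v` in position `i` of its attaching path. -/
def cornerAt (f : C.F) (i : ℕ) (v : C.V) : Prop :=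
  ∃ h : i < (C.att f).length, C.ini ((C.att f).get ⟨i, h⟩) = v

end TwoComplex

/-- A combinatorial map of 2-complexes. -/
structure CMap (C L : TwoComplex) where
  vMap : C.V → L.V
  eMap : C.E → L.E
  fMap : C.F → L.F
  ini_comm : ∀ e, L.ini (eMap e) = vMap (C.ini e)
  bar_comm : ∀ e, L.bar (eMap e) = eMap (C.bar e)
  att_comm : ∀ f, L.att (fMap f) = (C.att f).map eMap

/-- A spherical diagram over `L`: a combinatorial map from a cell-decomposed 2-sphere. -/
structure SphDiagram (L : TwoComplex) where
  C : TwoComplex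
  sphere : C.IsSphere
  φ : CMap C L

namespace SphDiagram

variable {L : TwoComplex}

/-- `v` is a folding vertex with folding pair `(f₁, f₂)`: two distinct 2-cells of the
sphere have corners at `v` which are mapped mirror-wise to the same corner of the same
2-cell of `L`. -/
def FoldingData (D : SphDiagram L) (v : D.C.V) (f₁ f₂ : D.C.F) : Prop :=
  f₁ ≠ f₂ ∧ D.φ.fMap f₁ = D.φ.fMap f₂ ∧
    ∃ i : ℕ, D.C.cornerAt f₁ i v ∧ D.C.cornerAt f₂ i v

def FoldingVertex (D : SphDiagram L) (v : D.C.V) : Prop :=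
  ∃ f₁ f₂, D.FoldingData v f₁ f₂

/-- A spherical diagram is vertex reduced if it has no folding vertex. -/
def VertexReduced (D : SphDiagram L) : Prop := ∀ v, ¬ D.FoldingVertex v

end SphDiagram

/-- A 2-complex is vertex aspherical (VA) if every spherical diagram over it has a
folding vertex. -/
def VA (L : TwoComplex) : Prop := ∀ D : SphDiagram L, ∃ v, D.FoldingVertex v

/-- A subcomplex of a 2-complex. -/
structure Subcomplex (L : TwoComplex) where
  sV : Set L.V
  sE : Set L.E
  sF : Set L.F
  bar_mem : ∀ e ∈ sE, L.bar e ∈ sE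
  ini_mem : ∀ e ∈ sE, L.ini e ∈ sV
  att_mem : ∀ f ∈ sF, ∀ e ∈ L.att f, e ∈ sE

namespace Subcomplex

variable {L : TwoComplex}

/-- The subcomplex as a 2-complex in its own right. -/
def toComplex (K : Subcomplex L) : TwoComplex where
  V := K.sV
  E := K.sE
  F := K.sF
  bar e := ⟨L.bar e.1, K.bar_mem e.1 e.2⟩
  bar_invol e := Subtype.ext (L.bar_invol e.1)
  ini e := ⟨L.ini e.1, K.ini_mem e.1 e.2⟩
  att f := (L.att f.1).pmap (fun e he => ⟨e, he⟩) (K.att_mem f.1 f.2)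

/-- The spherical diagram `D` maps entirely into the subcomplex `K`. -/
def MapsInto (K : Subcomplex L) (D : SphDiagram L) : Prop :=
  (∀ v, D.φ.vMap v ∈ K.sV) ∧ (∀ e, D.φ.eMap e ∈ K.sE) ∧ (∀ f, D.φ.fMap f ∈ K.sF)

end Subcomplex

/-- `L` is VA relative to the subcomplex `K`: every spherical diagram not mapping
entirely into `K` has a folding vertex whose folding pair of 2-cells maps to `L − K`. -/
def VArel (L : TwoComplex) (K : Subcomplex L) : Prop :=
  ∀ D : SphDiagram L, ¬ K.MapsInto D →
    ∃ v f₁ f₂, D.FoldingData v f₁ f₂ ∧ D.φ.fMap f₁ ∉ K.sF ∧ D.φ.fMap f₂ ∉ K.sF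

/-- Let `L` be a 2-complex and `K` a subcomplex such that `L` is VA
relative to `K`.  Then `π₂(L)` is generated as a `π₁(L)`-module by the image of `π₂(K)`:
abstractly, if `π₂(L)` is a module `P` over the group `G = π₁(L)` which is generated (as a
`G`-invariant subgroup) by the classes of vertex reduced spherical diagrams, then it is
already generated by the classes of spherical diagrams mapping into `K` (these represent
elements of the image of `π₂(K)`).  In particular, if `K` is aspherical then so is `L`. -/
theorem pi2_generated_by_subcomplex (L : TwoComplex) (K : Subcomplex L)
    (hrel : VArel L K)
    (G P : Type) [Group G] [AddCommGroup P] [DistribMulAction G P]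
    (cls : SphDiagram L → P)
    (hgen : ∀ N : AddSubgroup P, (∀ (g : G) (p : P), p ∈ N → g • p ∈ N) →
      (∀ D : SphDiagram L, D.VertexReduced → cls D ∈ N) → N = ⊤) :
    ∀ N : AddSubgroup P, (∀ (g : G) (p : P), p ∈ N → g • p ∈ N) →
      (∀ D : SphDiagram L, K.MapsInto D → cls D ∈ N) → N = ⊤ := by
  intro N hG hK
  refine hgen N hG fun D hred => hK D ?_
  by_contra hnot
  obtain ⟨v, f₁, f₂, hfd, _, _⟩ := hrel D hnot
  exact hred v ⟨f₁, f₂, hfd⟩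
end

section
/- Let Γ̄ be the quotient of a signed LOT Γ obtained by inverting the sign of a set X of vertices (replacing each x ∈ X by x⁻¹ in all attaching words). Then the link graph of the associated 2-complex is unchanged: lk(K(Γ)) = lk(K(Γ_X)). -/
/-- The attaching word of the 2-cell of `K(Γ)` coming from an edge `e` of a signed LOT
with vertex signs `s`: the word `x^{ε₁} z (z y^{ε₂})⁻¹ = x^{ε₁} z y^{-ε₂} z^{-1}`,
recorded as a list of letters (edge of `K(Γ)`, exponent sign). -/
def signedWord (G : LOG) (s : G.V → Bool) (e : G.E) : List (G.V × Bool) :=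
  [(G.src e, s (G.src e)), (G.lab e, true), (G.tgt e, !(s (G.tgt e))), (G.lab e, false)]

/-- The corners (edges of the link `lk(K(Γ))`, a graph on the vertices `x⁺ = (x, true)`
and `x⁻ = (x, false)`) determined by a cyclic attaching word: the corner between
consecutive letters `u^α`, `w^β` joins the arrival point of `u^α` with the departure
point of `w^β`. -/
def linkCorners {α : Type} (l : List (α × Bool)) : Multiset (Sym2 (α × Bool)) :=
  ↑((l.zip (l.rotate 1)).map fun p => s((p.1.1, !p.1.2), (p.2.1, p.2.2)))

private lemma perm_rev4 {α : Type*} (a b c d : α) : [a,b,c,d].Perm [d,c,b,a] := by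
  simpa using (List.reverse_perm [a,b,c,d]).symm

private lemma perm_outer4 {α : Type*} (a b c d : α) : [a,b,c,d].Perm [d,b,c,a] := by
  exact ((List.Perm.swap b a [c,d]).trans
    ((List.Perm.cons b ((List.Perm.swap c a [d]).trans
      (List.Perm.cons c (List.Perm.swap d a [])))).trans
    ((List.Perm.cons b (List.Perm.swap d c [a])).trans
      (List.Perm.swap d b [c,a]))))

/-- Let `Γ_X` be obtained from a signed LOT `Γ` by inverting the sign of
a set `X` of vertices.  Then the link of the associated 2-complex is unchanged:
`lk(K(Γ)) = lk(K(Γ_X))` (the link vertices coincide, and each 2-cell contributes the same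
multiset of corners). -/
theorem link_invariant_under_sign_change
    (G : LOG) (s : G.V → Bool) (X : Set G.V) [DecidablePred (· ∈ X)] :
    ∀ e : G.E,
      linkCorners (signedWord G s e) =
      linkCorners (signedWord G (fun v => if v ∈ X then !(s v) else s v) e) := by
  intro e
  simp only [linkCorners, signedWord, List.rotate]
  split_ifs <;>
    cases h1 : s (G.src e) <;> cases h2 : s (G.tgt e) <;>
      simp [Sym2.eq_swap] <;>
        first
          | rfl
          | exact perm_rev4 _ _ _ _
          | exact perm_outer4 _ _ _ _
          | exact List.Perm.swap _ _ _
end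

section
/- Let Γ = Γ₀ ∪ e be a LOT obtained from Γ₀ by attaching one edge e at a vertex x, where the other vertex y of e occurs nowhere as an edge label in Γ. Then the 2-complex K(Γ) is VA if and only if K(Γ₀) is VA. -/
/-- The standard 2-complex `K(Γ)` of a LOG `Γ`: one vertex, one edge per vertex of `Γ`,
and for each edge of `Γ` from `x` to `y` labeled `z` a 2-cell attached along
`x z (z y)⁻¹ = x z y⁻¹ z⁻¹`. -/
def LOG.Kc (G : LOG) : TwoComplex where
  V := PUnit
  E := G.V × Bool
  F := G.E
  bar p := (p.1, !p.2)
  bar_invol := by intro p; simp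
  ini _ := PUnit.unit
  att e := [(G.src e, true), (G.lab e, true), (G.tgt e, false), (G.lab e, false)]

/-- The sub-LOG spanned by a set of edges. -/
def LOG.restrict (G : LOG) (S : Set G.E) : LOG where
  V := G.V
  E := {e : G.E // e ∈ S}
  src e := G.src e.1
  tgt e := G.tgt e.1
  lab e := G.lab e.1

/-! Since `y` is an endpoint of `e₀` only and labels no edge, the 2-cell of `K(Γ)` coming from
`e₀` carries the edge `y` exactly once, and the reverse orientation of that edge lies on no 2-cell
of `K(Γ)`. In a spherical diagram every edge is shared by two 2-cells with opposite orientations,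
so no 2-cell of a spherical diagram over `K(Γ)` maps to the cell of `e₀`. Hence spherical
diagrams over `K(Γ)` and over `K(Γ₀)` are the same, with the same folding vertices. -/

theorem TwoComplex.IsSphere.exists_mem_att {C : TwoComplex} (hC : C.IsSphere) (e : C.E) :
    ∃ f, e ∈ C.att f := by
  classical
  obtain ⟨-, -, -, -, -, hcount, -⟩ := hC
  by_contra! hno
  have hzero : (∑ᶠ f : C.F, (C.att f).countP fun e' => decide (e' = e)) = 0 :=
    finsum_eq_zero_of_forall_eq_zero fun f =>
      List.countP_eq_zero.mpr fun e' he' hdec => hno f (of_decide_eq_true hdec ▸ he')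
  exact one_ne_zero ((hcount e).symm.trans hzero)

namespace CMap

variable {C L' L : TwoComplex}

def comp (ψ : CMap L' L) (φ : CMap C L') : CMap C L where
  vMap := ψ.vMap ∘ φ.vMap
  eMap := ψ.eMap ∘ φ.eMap
  fMap := ψ.fMap ∘ φ.fMap
  ini_comm e := by simp only [Function.comp_apply, ψ.ini_comm, φ.ini_comm]
  bar_comm e := by simp only [Function.comp_apply, ψ.bar_comm, φ.bar_comm]
  att_comm f := by simp only [Function.comp_apply, ψ.att_comm, φ.att_comm, List.map_map]

end CMap

namespace SphDiagram

variable {L' L : TwoComplex}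

def map (ψ : CMap L' L) (D : SphDiagram L') : SphDiagram L where
  C := D.C
  sphere := D.sphere
  φ := ψ.comp D.φ

theorem foldingData_map_iff {ψ : CMap L' L} (hψ : Function.Injective ψ.fMap)
    (D : SphDiagram L') (v : D.C.V) (f₁ f₂ : D.C.F) :
    (D.map ψ).FoldingData v f₁ f₂ ↔ D.FoldingData v f₁ f₂ :=
  and_congr_right fun _ => and_congr_left fun _ => hψ.eq_iff

theorem not_mem_att_fMap (D : SphDiagram L) {ε : L.E} (hε : ∀ c, L.bar ε ∉ L.att c)
    (f : D.C.F) : ε ∉ L.att (D.φ.fMap f) := by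
  intro hmem
  rw [D.φ.att_comm] at hmem
  obtain ⟨a, -, rfl⟩ := List.mem_map.mp hmem
  obtain ⟨f', hf'⟩ := D.sphere.exists_mem_att (D.C.bar a)
  apply hε (D.φ.fMap f')
  rw [D.φ.bar_comm, D.φ.att_comm]
  exact List.mem_map_of_mem hf'

end SphDiagram

theorem VA.of_cmap {L' L : TwoComplex} (ψ : CMap L' L) (hψ : Function.Injective ψ.fMap)
    (hL : VA L) : VA L' := fun D =>
  let ⟨v, f₁, f₂, hfold⟩ := hL (D.map ψ)
  ⟨v, f₁, f₂, (D.foldingData_map_iff hψ v f₁ f₂).mp hfold⟩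

namespace LOG

variable (G : LOG)

theorem mem_Kc_att_true {v : G.V} {e : G.E} :
    ((v, true) : G.V × Bool) ∈ G.Kc.att e ↔ v = G.src e ∨ v = G.lab e := by
  change (v, true) ∈ [(G.src e, true), (G.lab e, true), (G.tgt e, false), (G.lab e, false)] ↔ _
  simp

theorem mem_Kc_att_false {v : G.V} {e : G.E} :
    ((v, false) : G.V × Bool) ∈ G.Kc.att e ↔ v = G.tgt e ∨ v = G.lab e := by
  change (v, false) ∈ [(G.src e, true), (G.lab e, true), (G.tgt e, false), (G.lab e, false)] ↔ _
  simp

def restrictKcMap (S : Set G.E) : CMap (G.restrict S).Kc G.Kc where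
  vMap := id
  eMap := id
  fMap := Subtype.val
  ini_comm _ := rfl
  bar_comm _ := rfl
  att_comm _ := (List.map_id _).symm

variable {G}

theorem exists_mem_Kc_att_and_forall_not_mem {e₀ : G.E} {y : G.V}
    (hloop : G.src e₀ ≠ G.tgt e₀) (hy : G.src e₀ = y ∨ G.tgt e₀ = y)
    (hyonly : ∀ e, e ≠ e₀ → G.src e ≠ y ∧ G.tgt e ≠ y) (hylab : ∀ e, G.lab e ≠ y) :
    ∃ b, ((y, b) : G.V × Bool) ∈ G.Kc.att e₀ ∧ ∀ e, ((y, !b) : G.V × Bool) ∉ G.Kc.att e := by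
  have hend (e : G.E) (he : G.src e = y ∨ G.tgt e = y) : e = e₀ := by
    by_contra hne
    exact he.elim (hyonly e hne).1 (hyonly e hne).2
  rcases hy with hsrc | htgt
  · refine ⟨true, G.mem_Kc_att_true.mpr (Or.inl hsrc.symm), fun e he => ?_⟩
    obtain htgt | hlab := G.mem_Kc_att_false.mp he
    · exact hloop (hsrc.trans ((hend e (Or.inr htgt.symm)) ▸ htgt))
    · exact hylab e hlab.symm
  · refine ⟨false, G.mem_Kc_att_false.mpr (Or.inl htgt.symm), fun e he => ?_⟩
    obtain hsrc | hlab := G.mem_Kc_att_true.mp he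
    · exact hloop (((hend e (Or.inl hsrc.symm)) ▸ hsrc).symm.trans htgt.symm)
    · exact hylab e hlab.symm

end LOG

def SphDiagram.toRestrict {G : LOG} {S : Set G.E} (D : SphDiagram G.Kc)
    (hS : ∀ f, D.φ.fMap f ∈ S) :
    SphDiagram (G.restrict S).Kc where
  C := D.C
  sphere := D.sphere
  φ :=
    { vMap := D.φ.vMap
      eMap := D.φ.eMap
      fMap := fun f => ⟨D.φ.fMap f, hS f⟩
      ini_comm := D.φ.ini_comm
      bar_comm := D.φ.bar_comm
      att_comm := fun f => D.φ.att_comm f }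

theorem VA_iff_boundary_reduction_general
    (G : LOG) (hT : G.IsTree) (e₀ : G.E) (y : G.V)
    (hy : G.src e₀ = y ∨ G.tgt e₀ = y)
    (hyonly : ∀ e, e ≠ e₀ → G.src e ≠ y ∧ G.tgt e ≠ y)
    (hylab : ∀ e, G.lab e ≠ y) :
    VA G.Kc ↔ VA (G.restrict {e | e ≠ e₀}).Kc := by
  have hincl : Function.Injective (G.restrictKcMap {e | e ≠ e₀}).fMap :=
    fun _ _ => Subtype.ext
  refine ⟨VA.of_cmap _ hincl, fun hVA D => ?_⟩
  obtain ⟨-, -, -, -, hloop, -⟩ := hT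
  obtain ⟨b, hy₀, hbar⟩ := G.exists_mem_Kc_att_and_forall_not_mem (hloop e₀) hy hyonly hylab
  have hS (f : D.C.F) : D.φ.fMap f ≠ e₀ := fun hf =>
    D.not_mem_att_fMap (ε := (y, b)) hbar f (hf ▸ hy₀)
  obtain ⟨v, f₁, f₂, hfold⟩ := hVA (D.toRestrict hS)
  -- `(D.toRestrict hS).map (G.restrictKcMap _)` is `D` by definitional unfolding.
  exact ⟨v, f₁, f₂, ((D.toRestrict hS).foldingData_map_iff hincl v f₁ f₂).mpr hfold⟩

/-- Let `Γ = Γ₀ ∪ e₀` be a LOT obtained from `Γ₀` by attaching one edge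
`e₀` at a vertex `x` of `Γ₀`, where the other vertex `y` of `e₀` occurs nowhere as an edge
label in `Γ` (a boundary reduction).  Then `K(Γ)` is VA if and only if `K(Γ₀)` is VA. -/
theorem VA_iff_boundary_reduction
    (G : LOG) (hT : G.IsTree) (e₀ : G.E) (y : G.V)
    (hy : G.src e₀ = y ∨ G.tgt e₀ = y)
    (hyonly : ∀ e, e ≠ e₀ → G.src e ≠ y ∧ G.tgt e ≠ y)
    (hylab : ∀ e, G.lab e ≠ y)
    (hx : ∃ x, (G.src e₀ = x ∨ G.tgt e₀ = x) ∧ x ≠ y ∧ x ∈ G.verts {e | e ≠ e₀}) :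
    VA G.Kc ↔ VA (G.restrict {e | e ≠ e₀}).Kc :=
  VA_iff_boundary_reduction_general G hT e₀ y hy hyonly hylab
end
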